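/- Key step of the convexity theorem: let R be a convex set of events on vertex set V containing a source-incompatible set, and let H₁, H₂ ∈ R. Define H'₁ = H₁ ∪ {(s,t) ∈ H₂ | t ∉ B(H₂)}. Then H'₁ ∈ R and H₁ and H'₁ have the same sets of incoming arcs at every vertex of B(H₂): for all t ∈ B(H₂), {(s,t) ∈ H₁} = {(s,t) ∈ H'₁}. -/

import Mathlib

/-- The set of sources of an event (a set of arcs on `V`). -/
def sources {V : Type*} (H : Set (V × V)) : Set V :=
  {u | ∀ v : V, Relation.ReflTransGen (fun s t => (s, t) ∈ H) u v}

/-- A set of events is convex if adding to an event any single arc of another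
event yields an event of the set. -/
def ConvexEvents {V : Type*} (R : Set (Set (V × V))) : Prop :=
  ∀ H ∈ R, ∀ H' ∈ R, ∀ a ∈ H', insert a H ∈ R

namespace ConvexEvents

variable {V : Type*} {R : Set (Set (V × V))}

/-- Finiteness of `S` is what lets the single-arc insertions of convexity add all of `S`. -/
theorem union_mem_of_subset_of_finite (hconv : ConvexEvents R) {H H' S : Set (V × V)}
    (hH : H ∈ R) (hH' : H' ∈ R) (hS : S ⊆ H') (hfin : S.Finite) : H ∪ S ∈ R := by
  induction S, hfin using Set.Finite.induction_on with
  | empty => simpa using hH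
  | @insert a S _ _ ih =>
    have hsub : S ⊆ H' := (Set.subset_insert a S).trans hS
    rw [Set.union_insert]
    exact hconv _ (ih hsub) _ hH' _ (hS (Set.mem_insert a S))

end ConvexEvents

theorem mem_union_sep_snd_notMem_iff {V : Type*} {H₁ H₂ : Set (V × V)} {B : Set V}
    {s t : V} (ht : t ∈ B) :
    (s, t) ∈ H₁ ∪ {a ∈ H₂ | a.2 ∉ B} ↔ (s, t) ∈ H₁ := by
  simp [ht]

theorem convexity_key_step_general {V : Type*} [Fintype V]
    (R : Set (Set (V × V))) (hconv : ConvexEvents R)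
    (H₁ H₂ : Set (V × V)) (h₁ : H₁ ∈ R) (h₂ : H₂ ∈ R) :
    (H₁ ∪ {a ∈ H₂ | a.2 ∉ sources H₂}) ∈ R ∧
    (∀ t ∈ sources H₂, ∀ s : V,
      ((s, t) ∈ H₁ ↔ (s, t) ∈ H₁ ∪ {a ∈ H₂ | a.2 ∉ sources H₂})) :=
  ⟨hconv.union_mem_of_subset_of_finite h₁ h₂ (Set.sep_subset _ _) (Set.toFinite _),
    fun _ ht _ => (mem_union_sep_snd_notMem_iff ht).symm⟩

theorem convexity_key_step {V : Type*} [Fintype V]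
    (R : Set (Set (V × V))) (hconv : ConvexEvents R)
    -- R contains a source-incompatible set
    (hinc : ∃ D : Finset (Set (V × V)), ↑D ⊆ R ∧ D.Nonempty ∧
      (∀ H ∈ D, (sources H).Nonempty) ∧ (⋂ H ∈ D, sources H) = ∅)
    (H₁ H₂ : Set (V × V)) (h₁ : H₁ ∈ R) (h₂ : H₂ ∈ R) :
    (H₁ ∪ {a ∈ H₂ | a.2 ∉ sources H₂}) ∈ R ∧
    (∀ t ∈ sources H₂, ∀ s : V,
      ((s, t) ∈ H₁ ↔ (s, t) ∈ H₁ ∪ {a ∈ H₂ | a.2 ∉ sources H₂})) :=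
  convexity_key_step_general R hconv H₁ H₂ h₁ h₂
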